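/- Let h₁ ≤ h₂ ≤ ... ≤ h_L be a nondecreasing sequence of nonnegative reals and 1 ≤ k ≤ L. Then the maximum over all k-element sub-vectors h of (h₁,...,h_L) of the computation rate R(h, 𝟙) with the all-ones coefficient vector 𝟙 is attained by a window of k consecutive elements. -/

import Mathlib

open Real Finset

/-- Computation rate of the sub-vector of `h` indexed by `S`, with the all-ones
coefficient vector of length `k = S.card`. -/
noncomputable def cfRateOnes (P : ℝ) (h : ℕ → ℝ) (S : Finset ℕ) : ℝ :=
  (1/2) * max (Real.log (((S.card : ℝ) -
    P * (∑ j ∈ S, h j)^2 / (1 + P * ∑ j ∈ S, (h j)^2))⁻¹)) 0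

/-- For a "quasiconvex" sequence `v`, the minimum of `∑ v` over `k`-subsets of
`range L` is attained on a consecutive window. -/
lemma sum_quasiconvex_window (L k : ℕ) (hk : 1 ≤ k) (v : ℕ → ℝ)
    (hq : ∀ a b c : ℕ, a ≤ b → b ≤ c → c < L → v b ≤ max (v a) (v c)) :
    ∀ d : ℕ, ∀ S : Finset ℕ, S ⊆ Finset.range L → S.card = k →
      (∀ hne : S.Nonempty, S.max' hne - S.min' hne < d) →
      ∃ i : ℕ, i + k ≤ L ∧ ∑ j ∈ Finset.Ico i (i+k), v j ≤ ∑ j ∈ S, v j := by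
  intro d
  induction d with
  | zero =>
    intro S hsub hcard hd
    have hne : S.Nonempty := Finset.card_pos.mp (by omega)
    exact absurd (hd hne) (Nat.not_lt_zero _)
  | succ d ih =>
    intro S hsub hcard hd
    have hne : S.Nonempty := Finset.card_pos.mp (by omega)
    set m := S.min' hne with hm
    set M := S.max' hne with hM
    have hmS : m ∈ S := S.min'_mem hne
    have hMS : M ∈ S := S.max'_mem hne
    have hmM : m ≤ M := S.min'_le M hMS
    have hML : M < L := Finset.mem_range.mp (hsub hMS)
    have hsubIcc : S ⊆ Finset.Icc m M := by
      intro y hy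
      exact Finset.mem_Icc.mpr ⟨S.min'_le y hy, S.le_max' y hy⟩
    have hcardle : k ≤ M - m + 1 := by
      have h1 := Finset.card_le_card hsubIcc
      rw [hcard, Nat.card_Icc] at h1
      omega
    by_cases hcons : M - m + 1 = k
    · -- S is already a window
      refine ⟨m, by omega, ?_⟩
      have hsub2 : S ⊆ Finset.Ico m (m + k) := by
        intro y hy
        have := Finset.mem_Icc.mp (hsubIcc hy)
        exact Finset.mem_Ico.mpr ⟨this.1, by omega⟩
      have : S = Finset.Ico m (m + k) := by
        apply Finset.eq_of_subset_of_card_le hsub2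
        rw [hcard, Nat.card_Ico]; omega
      rw [← this]
    · -- there is a gap
      have hk2 : 2 ≤ k := by
        have hmMne : m ≠ M := by omega
        have : 1 < S.card := Finset.one_lt_card.mpr ⟨m, hmS, M, hMS, hmMne⟩
        omega
      -- find j ∈ Ioo m M, j ∉ S
      have hcardIoo : (Finset.Ioo m M).card = M - m - 1 := by
        rw [Nat.card_Ioo]
      have hinter : (Finset.Ioo m M ∩ S) ⊆ (S.erase m).erase M := by
        intro y hy
        obtain ⟨hy1, hy2⟩ := Finset.mem_inter.mp hy
        obtain ⟨hy3, hy4⟩ := Finset.mem_Ioo.mp hy1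
        exact Finset.mem_erase.mpr ⟨by omega, Finset.mem_erase.mpr ⟨by omega, hy2⟩⟩
      have hMe : M ∈ S.erase m := Finset.mem_erase.mpr ⟨by omega, hMS⟩
      have hcard2 : ((S.erase m).erase M).card = k - 2 := by
        rw [Finset.card_erase_of_mem hMe, Finset.card_erase_of_mem hmS, hcard]
        omega
      have hlt : (Finset.Ioo m M ∩ S).card < (Finset.Ioo m M).card := by
        have := Finset.card_le_card hinter
        rw [hcard2] at this
        rw [hcardIoo]
        omega
      have hsdne : ((Finset.Ioo m M) \ S).Nonempty := by
        rw [← Finset.card_pos]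
        have := Finset.card_inter_add_card_sdiff (Finset.Ioo m M) S
        omega
      obtain ⟨j, hj⟩ := hsdne
      obtain ⟨hjIoo, hjS⟩ := Finset.mem_sdiff.mp hj
      obtain ⟨hmj, hjM⟩ := Finset.mem_Ioo.mp hjIoo
      have hvj : v j ≤ max (v m) (v M) := hq m j M (le_of_lt hmj) (le_of_lt hjM) hML
      rcases le_max_iff.mp hvj with hvm | hvM
      · -- replace m by j
        have hjnot : j ∉ S.erase m := fun hx => hjS (Finset.mem_of_mem_erase hx)
        set S' := insert j (S.erase m) with hS'
        have hS'card : S'.card = k := by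
          rw [hS', Finset.card_insert_of_notMem hjnot, Finset.card_erase_of_mem hmS, hcard]
          omega
        have hS'sub : S' ⊆ Finset.range L := by
          intro y hy
          rcases Finset.mem_insert.mp hy with rfl | hy
          · exact Finset.mem_range.mpr (by omega)
          · exact hsub (Finset.mem_of_mem_erase hy)
        have hS'ne : S'.Nonempty := ⟨j, Finset.mem_insert_self _ _⟩
        have hbound : ∀ y ∈ S', m < y ∧ y ≤ M := by
          intro y hy
          rcases Finset.mem_insert.mp hy with rfl | hy
          · exact ⟨hmj, by omega⟩
          · obtain ⟨hy1, hy2⟩ := Finset.mem_erase.mp hy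
            have := S.min'_le y hy2
            have := S.le_max' y hy2
            exact ⟨by omega, by omega⟩
        have hmd : ∀ hne' : S'.Nonempty, S'.max' hne' - S'.min' hne' < d := by
          intro hne'
          have h1 : S'.max' hne' ≤ M := Finset.max'_le _ _ _ (fun y hy => (hbound y hy).2)
          have h2 : m < S'.min' hne' := by
            have := hbound _ (S'.min'_mem hne')
            omega
          have := hd hne
          omega
        obtain ⟨i, hiL, hisum⟩ := ih S' hS'sub hS'card hmd
        refine ⟨i, hiL, hisum.trans ?_⟩
        have e1 : ∑ x ∈ S', v x = v j + ∑ x ∈ S.erase m, v x := Finset.sum_insert hjnot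
        have e2 : ∑ x ∈ S.erase m, v x + v m = ∑ x ∈ S, v x := Finset.sum_erase_add _ _ hmS
        linarith
      · -- replace M by j
        have hjnot : j ∉ S.erase M := fun hx => hjS (Finset.mem_of_mem_erase hx)
        set S' := insert j (S.erase M) with hS'
        have hS'card : S'.card = k := by
          rw [hS', Finset.card_insert_of_notMem hjnot, Finset.card_erase_of_mem hMS, hcard]
          omega
        have hS'sub : S' ⊆ Finset.range L := by
          intro y hy
          rcases Finset.mem_insert.mp hy with rfl | hy
          · exact Finset.mem_range.mpr (by omega)
          · exact hsub (Finset.mem_of_mem_erase hy)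
        have hS'ne : S'.Nonempty := ⟨j, Finset.mem_insert_self _ _⟩
        have hbound : ∀ y ∈ S', m ≤ y ∧ y < M := by
          intro y hy
          rcases Finset.mem_insert.mp hy with rfl | hy
          · exact ⟨by omega, hjM⟩
          · obtain ⟨hy1, hy2⟩ := Finset.mem_erase.mp hy
            have := S.min'_le y hy2
            have := S.le_max' y hy2
            exact ⟨by omega, by omega⟩
        have hmd : ∀ hne' : S'.Nonempty, S'.max' hne' - S'.min' hne' < d := by
          intro hne'
          have h1 : S'.max' hne' < M := by
            have := hbound _ (S'.max'_mem hne')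
            omega
          have h2 : m ≤ S'.min' hne' := Finset.le_min' _ _ _ (fun y hy => (hbound y hy).1)
          have := hd hne
          omega
        obtain ⟨i, hiL, hisum⟩ := ih S' hS'sub hS'card hmd
        refine ⟨i, hiL, hisum.trans ?_⟩
        have e1 : ∑ x ∈ S', v x = v j + ∑ x ∈ S.erase M, v x := Finset.sum_insert hjnot
        have e2 : ∑ x ∈ S.erase M, v x + v M = ∑ x ∈ S, v x := Finset.sum_erase_add _ _ hMS
        linarith

/-- Quadratic identity underlying the computation rate. -/
lemma quad_identity (P : ℝ) (hP : 0 < P) (h : ℕ → ℝ) (S : Finset ℕ) (α : ℝ) :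
    α^2 + P * ∑ j ∈ S, (α * h j - 1)^2 =
      (1 + P * ∑ j ∈ S, (h j)^2) *
        (α - P * (∑ j ∈ S, h j) / (1 + P * ∑ j ∈ S, (h j)^2))^2
      + P * ((S.card : ℝ) - P * (∑ j ∈ S, h j)^2 / (1 + P * ∑ j ∈ S, (h j)^2)) := by
  have hB : (0:ℝ) ≤ ∑ j ∈ S, (h j)^2 := Finset.sum_nonneg (fun _ _ => sq_nonneg _)
  have hc : (0:ℝ) < 1 + P * ∑ j ∈ S, (h j)^2 := by positivity
  have hexp : ∑ j ∈ S, (α * h j - 1)^2 =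
      α^2 * (∑ j ∈ S, (h j)^2) - 2 * α * (∑ j ∈ S, h j) + S.card := by
    have : ∀ j ∈ S, (α * h j - 1)^2 = α^2 * (h j)^2 - 2 * α * (h j) + 1 := by
      intro j _; ring
    rw [Finset.sum_congr rfl this, Finset.sum_add_distrib, Finset.sum_sub_distrib,
      ← Finset.mul_sum, ← Finset.mul_sum, Finset.sum_const, nsmul_eq_mul, mul_one]
  rw [hexp]
  field_simp
  ring

/-- Positivity of the denominator-adjusted quantity. -/
lemma xval_pos (P : ℝ) (hP : 0 < P) (h : ℕ → ℝ) (S : Finset ℕ) (hcard : 1 ≤ S.card) :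
    0 < (S.card : ℝ) - P * (∑ j ∈ S, h j)^2 / (1 + P * ∑ j ∈ S, (h j)^2) := by
  have hB : (0:ℝ) ≤ ∑ j ∈ S, (h j)^2 := Finset.sum_nonneg (fun _ _ => sq_nonneg _)
  have hc : (0:ℝ) < 1 + P * ∑ j ∈ S, (h j)^2 := by positivity
  have hCS : (∑ j ∈ S, h j)^2 ≤ (S.card : ℝ) * ∑ j ∈ S, (h j)^2 := by
    exact_mod_cast sq_sum_le_card_mul_sum_sq (s := S) (f := h)
  have hk1 : (1:ℝ) ≤ (S.card : ℝ) := by exact_mod_cast hcard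
  rw [sub_pos, div_lt_iff₀ hc]
  nlinarith

/-- for a sorted nonnegative channel vector, the maximum of the
computation rate `R(h_S, 𝟙)` over `k`-element subsets is attained by a window of
`k` consecutive elements. -/
theorem stmt5 (L k : ℕ) (hk : 1 ≤ k) (hkL : k ≤ L) (P : ℝ) (hP : 0 < P)
    (h : ℕ → ℝ) (hmono : MonotoneOn h (Set.Iio L)) (hnn : ∀ j < L, 0 ≤ h j) :
    ∃ i : ℕ, i + k ≤ L ∧ ∀ S : Finset ℕ, S ⊆ Finset.range L → S.card = k →
      cfRateOnes P h S ≤ cfRateOnes P h (Finset.Ico i (i + k)) := by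
  classical
  set xval : Finset ℕ → ℝ := fun S =>
    (S.card : ℝ) - P * (∑ j ∈ S, h j)^2 / (1 + P * ∑ j ∈ S, (h j)^2) with hxval
  -- pick a minimizer T of xval over k-subsets of range L
  obtain ⟨S₀, hS₀sub, hS₀card⟩ := Finset.exists_subset_card_eq (s := Finset.range L) (n := k)
    (by simpa using hkL)
  have h𝒮ne : ((Finset.range L).powersetCard k).Nonempty :=
    ⟨S₀, Finset.mem_powersetCard.mpr ⟨hS₀sub, hS₀card⟩⟩
  obtain ⟨T, hT𝒮, hTmin⟩ := Finset.exists_min_image _ xval h𝒮ne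
  obtain ⟨hTsub, hTcard⟩ := Finset.mem_powersetCard.mp hT𝒮
  have hBT : (0:ℝ) ≤ ∑ j ∈ T, (h j)^2 := Finset.sum_nonneg (fun _ _ => sq_nonneg _)
  have hcT : (0:ℝ) < 1 + P * ∑ j ∈ T, (h j)^2 := by positivity
  have hAT : (0:ℝ) ≤ ∑ j ∈ T, h j :=
    Finset.sum_nonneg (fun j hj => hnn j (Finset.mem_range.mp (hTsub hj)))
  set α := P * (∑ j ∈ T, h j) / (1 + P * ∑ j ∈ T, (h j)^2) with hα
  have hα0 : 0 ≤ α := by positivity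
  set v : ℕ → ℝ := fun j => (α * h j - 1)^2 with hv
  have hq : ∀ a b c : ℕ, a ≤ b → b ≤ c → c < L → v b ≤ max (v a) (v c) := by
    intro a b c hab hbc hcL
    have haL : a < L := lt_of_le_of_lt (hab.trans hbc) hcL
    have hbL : b < L := lt_of_le_of_lt hbc hcL
    have h1 : h a ≤ h b := hmono (Set.mem_Iio.mpr haL) (Set.mem_Iio.mpr hbL) hab
    have h2 : h b ≤ h c := hmono (Set.mem_Iio.mpr hbL) (Set.mem_Iio.mpr hcL) hbc
    have g1 : α * h a - 1 ≤ α * h b - 1 := by nlinarith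
    have g2 : α * h b - 1 ≤ α * h c - 1 := by nlinarith
    rcases le_or_gt 0 (α * h b - 1) with hb0 | hb0
    · exact le_max_of_le_right (by simp only [hv]; nlinarith)
    · exact le_max_of_le_left (by simp only [hv]; nlinarith)
  have hdT : ∀ hne : T.Nonempty, T.max' hne - T.min' hne < L := by
    intro hne
    have : T.max' hne < L := Finset.mem_range.mp (hTsub (T.max'_mem hne))
    omega
  obtain ⟨i, hiL, hisum⟩ := sum_quasiconvex_window L k hk v hq L T hTsub hTcard hdT
  refine ⟨i, hiL, ?_⟩
  intro S hSsub hScard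
  set W := Finset.Ico i (i + k) with hW
  have hWcard : W.card = k := by simp [hW]
  have hWsub : W ⊆ Finset.range L := by
    intro x hx
    exact Finset.mem_range.mpr (lt_of_lt_of_le (Finset.mem_Ico.mp hx).2 hiL)
  -- xval W ≤ xval T
  have hidT : α^2 + P * ∑ j ∈ T, v j = P * xval T := by
    have := quad_identity P hP h T α
    have hz : (1 + P * ∑ j ∈ T, (h j)^2) *
        (α - P * (∑ j ∈ T, h j) / (1 + P * ∑ j ∈ T, (h j)^2))^2 = 0 := by
      rw [hα, sub_self]; ring
    simp only [hv, hxval]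
    rw [this, hz, zero_add]
  have hidW : P * xval W ≤ α^2 + P * ∑ j ∈ W, v j := by
    have := quad_identity P hP h W α
    have hBW : (0:ℝ) ≤ ∑ j ∈ W, (h j)^2 := Finset.sum_nonneg (fun _ _ => sq_nonneg _)
    have hcW : (0:ℝ) < 1 + P * ∑ j ∈ W, (h j)^2 := by positivity
    have hsq : 0 ≤ (1 + P * ∑ j ∈ W, (h j)^2) *
        (α - P * (∑ j ∈ W, h j) / (1 + P * ∑ j ∈ W, (h j)^2))^2 := by positivity
    simp only [hv, hxval]
    nlinarith [this]
  have hWT : xval W ≤ xval T := by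
    have h1 : P * xval W ≤ P * xval T := by
      calc P * xval W ≤ α^2 + P * ∑ j ∈ W, v j := hidW
        _ ≤ α^2 + P * ∑ j ∈ T, v j := by nlinarith [hisum]
        _ = P * xval T := hidT
    exact le_of_mul_le_mul_left h1 hP
  have hTS : xval T ≤ xval S := hTmin S (Finset.mem_powersetCard.mpr ⟨hSsub, hScard⟩)
  have hWS : xval W ≤ xval S := hWT.trans hTS
  have hWpos : 0 < xval W := xval_pos P hP h W (by omega)
  have hSpos : 0 < xval S := lt_of_lt_of_le hWpos hWS
  -- conclude about cfRateOnes
  have hinv : (xval S)⁻¹ ≤ (xval W)⁻¹ := by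
    apply inv_anti₀ hWpos hWS
  have hlog : Real.log (xval S)⁻¹ ≤ Real.log (xval W)⁻¹ :=
    Real.log_le_log (by positivity) hinv
  simp only [cfRateOnes, hxval] at hlog ⊢
  have := max_le_max hlog (le_refl (0:ℝ))
  nlinarith [this]
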